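/- Define the sequence (c_g)_{g≥0} by c_0 = −1 and, for g ≥ 1, c_g = (1/2) Σ_{g_1=1}^{g−1} c_{g_1} c_{g−g_1} + (1/12)(5g−4)(5g−6) c_{g−1}. Then the functions u_g(t_0, t_2) = c_g t_2^{3g−1} (1 − 2 t_0 t_2)^{−(5g−1)/2} + δ_{g,0} t_2^{−1} (where δ_{g,0} is the Kronecker delta) satisfy, on the domain t_2 ≠ 0 and 1 − 2 t_0 t_2 > 0, the genus-zero equation u_0 = t_0 + (t_2/2) u_0² and for every g ≥ 1 the recursion u_g = (t_2/2) Σ_{g_1 + g_2 = g} u_{g_1} u_{g_2} + (t_2/12) ∂² u_{g−1}/∂t_0². In particular c_1 = 1/12 and c_2 = 49/288. -/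

import Mathlib

/-!
Write `B = 1 - 2 t₀ t₂`. Then `u₀ = (1 - √B) / t₂` solves the genus-zero equation, and for
`g ≥ 1` the ansatz is the single term `c_g t₂^{3g-1} B^{-(5g-1)/2}`. In the genus-`g` equation,
the products `u_i u_{g-i}` with `0 < i < g`, the `c₀`-parts of the two end products `u₀ u_g`,
and `∂²u_{g-1}/∂t₀²` are all multiples of the one term `t₂^{3g-2} B^{-(5g-2)/2}`, while the
`t₂⁻¹`-part of `u₀` turns the end products into `2 t₂⁻¹ u_g`. So the equation for `u_g`
reduces to the recursion for `c_g`.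
-/

/-- The genus-`g` specific heat ansatz
`u_g(t₀,t₂) = c_g t₂^{3g−1} (1 − 2t₀t₂)^{−(5g−1)/2} + δ_{g,0} t₂⁻¹`. -/
noncomputable def U (c : ℕ → ℝ) (g : ℕ) (t0 t2 : ℝ) : ℝ :=
  c g * t2 ^ (3 * (g : ℤ) - 1) * (1 - 2 * t0 * t2) ^ (-(5 * (g : ℝ) - 1) / 2)
    + (if g = 0 then t2⁻¹ else 0)

open Finset Filter Topology

theorem Finset.sum_range_succ_eq_first_add_sum_Ico_add_last {M : Type*} [AddCommMonoid M]
    (f : ℕ → M) {n : ℕ} (hn : 1 ≤ n) :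
    ∑ i ∈ range (n + 1), f i = f 0 + ∑ i ∈ Ico 1 n, f i + f n := by
  rw [range_eq_Ico, sum_eq_sum_Ico_succ_bot (Nat.succ_pos n), sum_Ico_succ_top hn, add_assoc]

section AffinePower

variable {a b p x : ℝ}

theorem hasDerivAt_affine_rpow (hx : 0 < a + b * x) :
    HasDerivAt (fun y => (a + b * y) ^ p) (p * b * (a + b * x) ^ (p - 1)) x := by
  convert (((hasDerivAt_id' x).const_mul b).const_add a).rpow_const (p := p) (Or.inl hx.ne')
    using 1
  ring

theorem deriv_deriv_const_mul_affine_rpow_add_const (K C : ℝ) (hx : 0 < a + b * x) :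
    deriv (deriv fun y => K * (a + b * y) ^ p + C) x
      = K * (p * (p - 1) * b ^ 2) * (a + b * x) ^ (p - 2) := by
  have hpos : ∀ᶠ y in 𝓝 x, 0 < a + b * y :=
    (continuous_const.add (continuous_const.mul continuous_id)).continuousAt.eventually
      (eventually_gt_nhds hx)
  have hderiv : (deriv fun y => K * (a + b * y) ^ p + C)
      =ᶠ[𝓝 x] fun y => (K * p * b) * (a + b * y) ^ (p - 1) :=
    hpos.mono fun y hy => by
      rw [(((hasDerivAt_affine_rpow hy).const_mul K).add_const C).deriv]
      ring
  rw [hderiv.deriv_eq, ((hasDerivAt_affine_rpow hx).const_mul (K * p * b)).deriv,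
    show p - 1 - 1 = p - 2 by ring]
  ring

end AffinePower

noncomputable def ansatzTerm (a : ℤ) (p t0 t2 : ℝ) : ℝ :=
  t2 ^ a * (1 - 2 * t0 * t2) ^ p

section AnsatzTerm

variable {t0 t2 : ℝ}

theorem ansatzTerm_mul (ht2 : t2 ≠ 0) (hB : 0 < 1 - 2 * t0 * t2) (a b : ℤ) (p q : ℝ) :
    ansatzTerm a p t0 t2 * ansatzTerm b q t0 t2 = ansatzTerm (a + b) (p + q) t0 t2 := by
  simp only [ansatzTerm, zpow_add₀ ht2, Real.rpow_add hB]
  ring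

theorem deriv_deriv_const_mul_ansatzTerm_add_const (ht2 : t2 ≠ 0) (hB : 0 < 1 - 2 * t0 * t2)
    (a : ℤ) (p K C : ℝ) :
    deriv (deriv fun x => K * ansatzTerm a p x t2 + C) t0
      = K * (4 * p * (p - 1)) * ansatzTerm (a + 2) (p - 2) t0 t2 := by
  have hB' : 0 < 1 + (-2 * t2) * t0 := by linarith
  have hfun : (fun x => K * ansatzTerm a p x t2 + C)
      = fun x => (K * t2 ^ a) * (1 + (-2 * t2) * x) ^ p + C := by
    funext x
    simp only [ansatzTerm, show 1 - 2 * x * t2 = 1 + (-2 * t2) * x by ring]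
    ring
  rw [hfun, deriv_deriv_const_mul_affine_rpow_add_const _ _ hB', ansatzTerm, zpow_add₀ ht2,
    show 1 + (-2 * t2) * t0 = 1 - 2 * t0 * t2 by ring, zpow_ofNat]
  ring

end AnsatzTerm

theorem U_eq (c : ℕ → ℝ) (g : ℕ) (t0 t2 : ℝ) :
    U c g t0 t2
      = c g * ansatzTerm (3 * g - 1) (-(5 * g - 1) / 2) t0 t2 + if g = 0 then t2⁻¹ else 0 := by
  rw [U, ansatzTerm, mul_assoc]

theorem U_of_ne_zero (c : ℕ → ℝ) {g : ℕ} (hg : g ≠ 0) (t0 t2 : ℝ) :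
    U c g t0 t2 = c g * ansatzTerm (3 * g - 1) (-(5 * g - 1) / 2) t0 t2 := by
  rw [U_eq, if_neg hg, add_zero]

section GenusExpansion

variable {c : ℕ → ℝ} {t0 t2 : ℝ}

theorem U_zero_eq (hc0 : c 0 = -1) :
    U c 0 t0 t2 = (1 - √(1 - 2 * t0 * t2)) / t2 := by
  rw [U_eq, hc0, ansatzTerm, Real.sqrt_eq_rpow]
  norm_num
  ring

theorem U_zero_eq_genus_zero (hc0 : c 0 = -1) (ht2 : t2 ≠ 0) (hB : 0 < 1 - 2 * t0 * t2) :
    U c 0 t0 t2 = t0 + t2 / 2 * (U c 0 t0 t2) ^ 2 := by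
  have hsq : √(1 - 2 * t0 * t2) ^ 2 = 1 - 2 * t0 * t2 := Real.sq_sqrt hB.le
  rw [U_zero_eq hc0]
  field_simp
  linear_combination (-1) * hsq

theorem ansatzTerm_genus_mul (ht2 : t2 ≠ 0) (hB : 0 < 1 - 2 * t0 * t2) (i j : ℕ) :
    ansatzTerm (3 * i - 1) (-(5 * i - 1) / 2) t0 t2
        * ansatzTerm (3 * j - 1) (-(5 * j - 1) / 2) t0 t2
      = ansatzTerm (3 * (i + j : ℕ) - 2) (-(5 * (i + j : ℕ) - 2) / 2) t0 t2 := by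
  rw [ansatzTerm_mul ht2 hB]
  push_cast
  congr 1 <;> ring

theorem sum_U_mul_U (hc0 : c 0 = -1) (ht2 : t2 ≠ 0) (hB : 0 < 1 - 2 * t0 * t2) {g : ℕ}
    (hg : 1 ≤ g) :
    ∑ i ∈ range (g + 1), U c i t0 t2 * U c (g - i) t0 t2
      = (∑ i ∈ Ico 1 g, c i * c (g - i) - 2 * c g)
          * ansatzTerm (3 * g - 2) (-(5 * g - 2) / 2) t0 t2
        + 2 * t2⁻¹ * (c g * ansatzTerm (3 * g - 1) (-(5 * g - 1) / 2) t0 t2) := by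
  have hmul : ∀ {i j : ℕ}, i ≠ 0 → j ≠ 0 → i + j = g →
      U c i t0 t2 * U c j t0 t2
        = c i * c j * ansatzTerm (3 * g - 2) (-(5 * g - 2) / 2) t0 t2 := by
    intro i j hi hj hij
    rw [U_of_ne_zero c hi, U_of_ne_zero c hj, ← hij, ← ansatzTerm_genus_mul ht2 hB]
    ring
  have hend : U c 0 t0 t2 * U c g t0 t2
      = -c g * ansatzTerm (3 * g - 2) (-(5 * g - 2) / 2) t0 t2
        + t2⁻¹ * (c g * ansatzTerm (3 * g - 1) (-(5 * g - 1) / 2) t0 t2) := by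
    rw [U_eq c 0, if_pos rfl, U_of_ne_zero c (by omega : g ≠ 0), hc0, ← zero_add g,
      ← ansatzTerm_genus_mul ht2 hB, zero_add]
    ring
  rw [Finset.sum_range_succ_eq_first_add_sum_Ico_add_last _ hg, Nat.sub_zero, Nat.sub_self,
    mul_comm (U c g t0 t2), hend,
    sum_congr rfl fun i hi => by
      obtain ⟨hi1, hig⟩ := mem_Ico.mp hi
      exact hmul (by omega) (by omega) (by omega),
    ← sum_mul]
  ring

theorem deriv_deriv_U_pred (ht2 : t2 ≠ 0) (hB : 0 < 1 - 2 * t0 * t2) {g : ℕ} (hg : 1 ≤ g) :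
    deriv (deriv fun x => U c (g - 1) x t2) t0
      = c (g - 1) * ((5 * g - 4) * (5 * g - 6))
        * ansatzTerm (3 * g - 2) (-(5 * g - 2) / 2) t0 t2 := by
  simp only [U_eq c (g - 1)]
  rw [deriv_deriv_const_mul_ansatzTerm_add_const ht2 hB]
  push_cast [Nat.cast_sub hg]
  congr 1
  · ring
  · congr 1 <;> ring

end GenusExpansion

/-- if `c 0 = −1` and
`c g = (1/2) Σ_{g₁=1}^{g−1} c_{g₁} c_{g−g₁} + (1/12)(5g−4)(5g−6) c_{g−1}` for `g ≥ 1`,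
then `c 1 = 1/12`, `c 2 = 49/288`, and on the domain `t₂ ≠ 0`, `1 − 2t₀t₂ > 0` the
functions `u_g = U c g` satisfy the genus-zero equation `u₀ = t₀ + (t₂/2) u₀²` and,
for `g ≥ 1`, `u_g = (t₂/2) Σ_{g₁+g₂=g} u_{g₁} u_{g₂} + (t₂/12) ∂²u_{g−1}/∂t₀²`. -/
theorem genus_expansion_solution (c : ℕ → ℝ) (hc0 : c 0 = -1)
    (hcrec : ∀ g : ℕ, 1 ≤ g →
      c g = (1 / 2) * (∑ i ∈ Finset.Ico 1 g, c i * c (g - i))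
        + (1 / 12) * (5 * (g : ℝ) - 4) * (5 * (g : ℝ) - 6) * c (g - 1)) :
    c 1 = 1 / 12 ∧ c 2 = 49 / 288 ∧
    ∀ t0 t2 : ℝ, t2 ≠ 0 → 0 < 1 - 2 * t0 * t2 →
      (U c 0 t0 t2 = t0 + t2 / 2 * (U c 0 t0 t2) ^ 2) ∧
      (∀ g : ℕ, 1 ≤ g →
        U c g t0 t2
          = t2 / 2 * (∑ i ∈ Finset.range (g + 1), U c i t0 t2 * U c (g - i) t0 t2)
            + t2 / 12 * deriv (deriv fun x => U c (g - 1) x t2) t0) := by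
  have hc1 : c 1 = 1 / 12 := by
    rw [hcrec 1 le_rfl]
    norm_num [hc0]
  have hc2 : c 2 = 49 / 288 := by
    rw [hcrec 2 (by norm_num), Nat.Ico_succ_singleton]
    norm_num [hc1]
  refine ⟨hc1, hc2, fun t0 t2 ht2 hB => ⟨U_zero_eq_genus_zero hc0 ht2 hB, fun g hg => ?_⟩⟩
  rw [sum_U_mul_U hc0 ht2 hB hg, deriv_deriv_U_pred ht2 hB hg, U_of_ne_zero c (by omega),
    hcrec g hg]
  field_simp
  ring
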